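/- Let w be a word split at position ⌈|w|/2⌉ into w = u ++ v, and let q satisfy ed(w, q) ≤ d. Then there exists a split q = p' ++ s' with ed(u,p') + ed(v,s') ≤ d such that the split position |p'| lies in the interval [⌈|q|/2⌉ − ⌈d/2⌉, ⌈|q|/2⌉ + ⌈d/2⌉]. -/

import Mathlib

namespace Levenshtein

/-- A cost structure for Levenshtein edit distance (as in the removed
`Mathlib.Data.List.EditDistance.Defs`). -/
structure Cost (α β δ : Type*) where
  delete : α → δ
  insert : β → δ
  substitute : α → β → δ

/-- The default cost structure: unit costs for deletion, insertion and substitution of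
unequal letters, zero for substituting a letter by itself. -/
def defaultCost {α : Type*} [DecidableEq α] : Cost α α ℕ where
  delete _ := 1
  insert _ := 1
  substitute a b := if a = b then 0 else 1

/-- One step of the dynamic program: from the suffix distances of `xs` to `ys`,
compute those of `xs` to `y :: ys`. -/
def impl {α β δ : Type*} [AddZeroClass δ] [Min δ] (C : Cost α β δ)
    (xs : List α) (y : β) (d : {r : List δ // 0 < r.length}) :
    {r : List δ // 0 < r.length} :=
  let ⟨ds, w⟩ := d
  xs.zip (ds.zip ds.tail) |>.foldr
    (init := ⟨[C.insert y + ds.getLast (List.ne_nil_of_length_pos w)], by simp⟩)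
    (fun ⟨x, d₀, d₁⟩ ⟨r, w⟩ =>
      ⟨min (C.delete x + r[0]) (min (C.insert y + d₀) (C.substitute x y + d₁)) :: r, by simp⟩)

end Levenshtein

open Levenshtein in
/-- Edit distances between all suffixes of `xs` and `ys`. -/
def suffixLevenshtein {α β δ : Type*} [AddZeroClass δ] [Min δ] (C : Cost α β δ)
    (xs : List α) (ys : List β) : {r : List δ // 0 < r.length} :=
  ys.foldr
    (impl C xs)
    (xs.foldr (init := ⟨[0], by simp⟩) (fun a ⟨r, w⟩ => ⟨(C.delete a + r[0]) :: r, by simp⟩))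

open Levenshtein in
/-- The Levenshtein edit distance with cost structure `C`. -/
def levenshtein {α β δ : Type*} [AddZeroClass δ] [Min δ] (C : Cost α β δ)
    (xs : List α) (ys : List β) : δ :=
  let ⟨r, w⟩ := suffixLevenshtein C xs ys
  r[0]

/-- Levenshtein edit distance with unit costs. -/
def ed {α : Type*} [DecidableEq α] (u v : List α) : ℕ :=
  levenshtein Levenshtein.defaultCost u v

/-! An optimal alignment of `w = u ++ v` with `q` cuts `q` into `p ++ s` with
`ed u p + ed v s ≤ ed w q ≤ d`. Edit distance dominates the difference of lengths, so
`|p| - |s|` differs from `|u| - |v| ∈ {0, 1}` by at most `d`; as `|p| + |s| = |q|`, this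
confines `|p|` to the window `⌈|q|/2⌉ ± ⌈d/2⌉`. -/

open Levenshtein

theorem eq_of_getElem_zero_eq_of_tail_eq {α : Type*} {x y : {r : List α // 0 < r.length}}
    (h₀ : x.1[0]'x.2 = y.1[0]'y.2) (h : x.1.tail = y.1.tail) : x = y := by
  match x, y with
  | ⟨_ :: _, _⟩, ⟨_ :: _, _⟩ => simp_all

section
variable {α β δ : Type*} [AddZeroClass δ] [Min δ] (C : Cost α β δ)

theorem Levenshtein.impl_cons {x : α} {xs : List α} {y : β} {d : δ} {ds : List δ} {w}
    (w' : 0 < ds.length) :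
    impl C (x :: xs) y ⟨d :: ds, w⟩ =
      let ⟨r, w⟩ := impl C xs y ⟨ds, w'⟩
      ⟨min (C.delete x + r[0]) (min (C.insert y + d) (C.substitute x y + ds[0])) :: r, by simp⟩ :=
  match ds, w' with | _ :: _, _ => rfl

theorem suffixLevenshtein_cons_left (x : α) (xs : List α) (ys : List β) :
    suffixLevenshtein C (x :: xs) ys =
      ⟨levenshtein C (x :: xs) ys :: (suffixLevenshtein C xs ys).1, by simp⟩ := by
  induction ys with
  | nil => rfl
  | cons y ys ih =>
    apply eq_of_getElem_zero_eq_of_tail_eq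
    · rfl
    · show (impl C (x :: xs) y (suffixLevenshtein C (x :: xs) ys)).1.tail =
        (impl C xs y (suffixLevenshtein C xs ys)).1
      rw [ih, impl_cons C (suffixLevenshtein C xs ys).2]
      rfl

theorem suffixLevenshtein_nil_left (ys : List β) :
    ∃ a, suffixLevenshtein C ([] : List α) ys = ⟨[a], by simp⟩ := by
  induction ys with
  | nil => exact ⟨0, rfl⟩
  | cons y ys ih =>
    obtain ⟨a, ha⟩ := ih
    exact ⟨C.insert y + a, show impl C [] y (suffixLevenshtein C [] ys) = _ by rw [ha]; rfl⟩

@[simp]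
theorem levenshtein_nil_nil : levenshtein C ([] : List α) ([] : List β) = 0 := rfl

theorem levenshtein_cons_nil (x : α) (xs : List α) :
    levenshtein C (x :: xs) ([] : List β) = C.delete x + levenshtein C xs ([] : List β) := rfl

theorem levenshtein_nil_cons (y : β) (ys : List β) :
    levenshtein C ([] : List α) (y :: ys) = C.insert y + levenshtein C ([] : List α) ys := by
  obtain ⟨a, ha⟩ := suffixLevenshtein_nil_left C (α := α) ys
  unfold levenshtein
  show (impl C [] y (suffixLevenshtein C [] ys)).1[0]'_ = _
  simp only [ha]
  rfl

theorem levenshtein_cons_cons (x : α) (xs : List α) (y : β) (ys : List β) :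
    levenshtein C (x :: xs) (y :: ys) =
      min (C.delete x + levenshtein C xs (y :: ys))
        (min (C.insert y + levenshtein C (x :: xs) ys)
          (C.substitute x y + levenshtein C xs ys)) := by
  unfold levenshtein
  show (impl C (x :: xs) y (suffixLevenshtein C (x :: xs) ys)).1[0]'_ = _
  simp only [suffixLevenshtein_cons_left C x xs ys, impl_cons C (suffixLevenshtein C xs ys).2]
  rfl

end

theorem levenshtein_append_nil {α β δ : Type*} [AddMonoid δ] [Min δ] (C : Cost α β δ)
    (u v : List α) :
    levenshtein C (u ++ v) ([] : List β) = levenshtein C u [] + levenshtein C v [] := by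
  induction u with
  | nil => simp
  | cons x u ih => rw [List.cons_append, levenshtein_cons_nil, levenshtein_cons_nil, ih, add_assoc]

section
variable {α β δ : Type*} [AddZeroClass δ] [LinearOrder δ] (C : Cost α β δ)

theorem levenshtein_cons_le_delete_add (x : α) (xs : List α) (ys : List β) :
    levenshtein C (x :: xs) ys ≤ C.delete x + levenshtein C xs ys := by
  cases ys with
  | nil => exact (levenshtein_cons_nil C x xs).le
  | cons y ys => exact (levenshtein_cons_cons C x xs y ys).trans_le (min_le_left _ _)

theorem levenshtein_cons_cons_le_insert_add (x : α) (xs : List α) (y : β) (ys : List β) :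
    levenshtein C (x :: xs) (y :: ys) ≤ C.insert y + levenshtein C (x :: xs) ys :=
  (levenshtein_cons_cons C x xs y ys).trans_le ((min_le_right _ _).trans (min_le_left _ _))

theorem levenshtein_cons_cons_le_substitute_add (x : α) (xs : List α) (y : β) (ys : List β) :
    levenshtein C (x :: xs) (y :: ys) ≤ C.substitute x y + levenshtein C xs ys :=
  (levenshtein_cons_cons C x xs y ys).trans_le ((min_le_right _ _).trans (min_le_right _ _))

end

theorem add_le_add_of_le_add {δ : Type*} [AddSemigroup δ] [Preorder δ] [AddLeftMono δ]
    [AddRightMono δ] {a a' b c e : δ} (ha : a ≤ c + a') (h : a' + b ≤ e) : a + b ≤ c + e :=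
  (add_le_add_left ha b).trans_eq (add_assoc c a' b) |>.trans (add_le_add_right h c)

theorem exists_eq_append_levenshtein_add_le {α β δ : Type*} [AddCommMonoid δ] [LinearOrder δ]
    [IsOrderedAddMonoid δ] (C : Cost α β δ) :
    ∀ (u v : List α) (q : List β), ∃ p s, q = p ++ s ∧
      levenshtein C u p + levenshtein C v s ≤ levenshtein C (u ++ v) q
  | [], v, q => ⟨[], q, rfl, by simp⟩
  | x :: u, v, [] => ⟨[], [], rfl, (levenshtein_append_nil C (x :: u) v).ge⟩
  | x :: u, v, y :: q => by
    obtain ⟨p₁, s₁, hq₁, h₁⟩ := exists_eq_append_levenshtein_add_le C u v (y :: q)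
    obtain ⟨p₂, s₂, hq₂, h₂⟩ := exists_eq_append_levenshtein_add_le C (x :: u) v q
    obtain ⟨p₃, s₃, hq₃, h₃⟩ := exists_eq_append_levenshtein_add_le C u v q
    rw [List.cons_append, levenshtein_cons_cons, ← List.cons_append]
    rcases min_choice (C.delete x + _) (min _ _) with h | h <;> rw [h]
    · exact ⟨p₁, s₁, hq₁, add_le_add_of_le_add (levenshtein_cons_le_delete_add C x u p₁) h₁⟩
    rcases min_choice (C.insert y + _) (C.substitute x y + _) with h | h <;> rw [h]
    · exact ⟨y :: p₂, s₂, by rw [hq₂, List.cons_append],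
        add_le_add_of_le_add (levenshtein_cons_cons_le_insert_add C x u y p₂) h₂⟩
    · exact ⟨y :: p₃, s₃, by rw [hq₃, List.cons_append],
        add_le_add_of_le_add (levenshtein_cons_cons_le_substitute_add C x u y p₃) h₃⟩

section
variable {α : Type*} [DecidableEq α]

theorem ed_nil_left (ys : List α) : ed [] ys = ys.length := by
  induction ys with
  | nil => rfl
  | cons y ys ih => rw [ed, levenshtein_nil_cons, ← ed, ih, List.length_cons, add_comm]; rfl

theorem ed_nil_right (xs : List α) : ed xs [] = xs.length := by
  induction xs with
  | nil => rfl
  | cons x xs ih => rw [ed, levenshtein_cons_nil, ← ed, ih, List.length_cons, add_comm]; rfl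

theorem ed_cons_cons (x y : α) (xs ys : List α) :
    ed (x :: xs) (y :: ys) = min (1 + ed xs (y :: ys))
      (min (1 + ed (x :: xs) ys) ((if x = y then 0 else 1) + ed xs ys)) :=
  levenshtein_cons_cons _ x xs y ys

theorem length_le_ed_add_length : ∀ xs ys : List α, xs.length ≤ ed xs ys + ys.length
  | [], _ => Nat.zero_le _
  | _ :: _, [] => by rw [ed_nil_right]; omega
  | x :: xs, y :: ys => by
    have := length_le_ed_add_length xs (y :: ys)
    have := length_le_ed_add_length (x :: xs) ys
    have := length_le_ed_add_length xs ys
    simp only [List.length_cons] at *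
    rw [ed_cons_cons]
    split_ifs <;> omega

theorem length_le_ed_add_length' : ∀ xs ys : List α, ys.length ≤ ed xs ys + xs.length
  | _, [] => Nat.zero_le _
  | [], _ :: _ => by rw [ed_nil_left]; omega
  | x :: xs, y :: ys => by
    have := length_le_ed_add_length' xs (y :: ys)
    have := length_le_ed_add_length' (x :: xs) ys
    have := length_le_ed_add_length' xs ys
    simp only [List.length_cons] at *
    rw [ed_cons_cons]
    split_ifs <;> omega

end

/-- Splitting lemma: if `w` is split at position `⌈|w|/2⌉` into `u ++ v` and
`ed w q ≤ d`, then `q` splits as `p' ++ s'` with `ed u p' + ed v s' ≤ d` and the split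
position `|p'|` lies in the interval `⌈|q|/2⌉ ± ⌈d/2⌉`. -/
theorem exists_split_near_middle {α : Type*} [DecidableEq α]
    (w q : List α) (d : ℕ) (hd : ed w q ≤ d) :
    ∃ p' s' : List α, q = p' ++ s' ∧
      ed (w.take ((w.length + 1) / 2)) p' + ed (w.drop ((w.length + 1) / 2)) s' ≤ d ∧
      (q.length + 1) / 2 - (d + 1) / 2 ≤ p'.length ∧
      p'.length ≤ (q.length + 1) / 2 + (d + 1) / 2 := by
  set m := (w.length + 1) / 2
  obtain ⟨p, s, rfl, hps⟩ :=
    exists_eq_append_levenshtein_add_le defaultCost (w.take m) (w.drop m) q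
  rw [List.take_append_drop] at hps
  have hcost : ed (w.take m) p + ed (w.drop m) s ≤ d := hps.trans hd
  have hp₁ := length_le_ed_add_length (w.take m) p
  have hp₂ := length_le_ed_add_length' (w.take m) p
  have hs₁ := length_le_ed_add_length (w.drop m) s
  have hs₂ := length_le_ed_add_length' (w.drop m) s
  simp only [List.length_take, List.length_drop, List.length_append] at hp₁ hp₂ hs₁ hs₂ ⊢
  refine ⟨p, s, rfl, hcost, ?_, ?_⟩ <;> omega
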